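/- For the 3-digit Kaprekar routine, if n has parameter α (the difference between largest and smallest digit), then K(n) has parameter α - 1 when 6 ≤ α ≤ 9, and parameter 10 - α when 0 < α ≤ 5. -/

import Mathlib

/-- The decimal digits of `n` (little-endian), padded with zeros to length `w`. -/
def padDigits (w n : ℕ) : List ℕ := (Nat.digits 10 n ++ List.replicate w 0).take w

/-- The padded digits of `n` sorted ascending (little-endian), so that
`Nat.ofDigits 10 (sortedDigits w n)` is the descending arrangement `X` and
`Nat.ofDigits 10 (sortedDigits w n).reverse` is the ascending arrangement `Y`. -/
def sortedDigits (w n : ℕ) : List ℕ := (padDigits w n).mergeSort (· ≤ ·)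

/-- The Kaprekar map on `w`-digit numbers: descending arrangement minus ascending arrangement. -/
def kap (w n : ℕ) : ℕ :=
  Nat.ofDigits 10 (sortedDigits w n) - Nat.ofDigits 10 (sortedDigits w n).reverse

/-- All `w` (padded) digits of `n` are equal. -/
def allEqDigits (w n : ℕ) : Prop := ∃ d, padDigits w n = List.replicate w d

/-- The parameter of a 3-digit number: largest digit minus smallest digit. -/
def param3 (n : ℕ) : ℕ := (sortedDigits 3 n).getD 2 0 - (sortedDigits 3 n).getD 0 0

/-!
Writing the sorted digits of `n` as `a ≤ b ≤ c`, the middle digit cancels in `X - Y`, so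
`K(n) = 99 (c - a) = 99 α`. For `1 ≤ α ≤ 9` the digits of `99 α` are `α - 1, 9, 10 - α`, whose
largest entry is `9`; hence the parameter of `K(n)` is `9 - min (α - 1) (10 - α)`.
-/

theorem padDigits_zero (n : ℕ) : padDigits 0 n = [] := rfl

theorem padDigits_succ (w n : ℕ) : padDigits (w + 1) n = n % 10 :: padDigits w (n / 10) := by
  rcases Nat.eq_zero_or_pos n with rfl | hn
  · simp [padDigits, List.replicate_succ]
  · rw [padDigits, Nat.digits_def' (by norm_num : 1 < 10) hn, List.replicate_succ',
      ← List.append_assoc, List.cons_append, List.cons_append, List.take_succ_cons,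
      List.take_append_of_le_length (by simp), padDigits]

theorem padDigits_three (n : ℕ) : padDigits 3 n = [n % 10, n / 10 % 10, n / 100 % 10] := by
  simp [padDigits_succ, padDigits_zero, Nat.div_div_eq_div_mul]

theorem sortedDigits_perm (w n : ℕ) : (sortedDigits w n).Perm (padDigits w n) :=
  List.mergeSort_perm _ _

theorem sortedDigits_pairwise (w n : ℕ) : (sortedDigits w n).Pairwise (· ≤ ·) :=
  List.pairwise_mergeSort' (r := (· ≤ · : ℕ → ℕ → Prop)) _

theorem length_sortedDigits (w n : ℕ) : (sortedDigits w n).length = w := by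
  rw [(sortedDigits_perm w n).length_eq]
  simp [padDigits]

theorem exists_sortedDigits_three (n : ℕ) :
    ∃ a b c, sortedDigits 3 n = [a, b, c] ∧ a ≤ b ∧ b ≤ c := by
  have hsorted := sortedDigits_pairwise 3 n
  match hl : sortedDigits 3 n, length_sortedDigits 3 n with
  | [a, b, c], _ =>
    rw [hl] at hsorted
    simp only [List.pairwise_cons, List.mem_cons] at hsorted
    exact ⟨a, b, c, rfl, hsorted.1 b (by simp), hsorted.2.1 c (by simp)⟩

theorem kap_three_eq_mul_param3 (n : ℕ) : kap 3 n = 99 * param3 n := by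
  obtain ⟨a, b, c, hl, hab, hbc⟩ := exists_sortedDigits_three n
  simp only [kap, param3, hl, List.reverse_cons, List.reverse_nil, List.nil_append,
    List.cons_append, Nat.ofDigits_cons, Nat.ofDigits_nil, List.getD_cons_succ, List.getD_cons_zero]
  omega

theorem param3_eq_of_padDigits {n x y z : ℕ} (h : padDigits 3 n = [x, y, z]) :
    param3 n = max x (max y z) - min x (min y z) := by
  obtain ⟨a, b, c, hl, hab, hbc⟩ := exists_sortedDigits_three n
  have hmem : ∀ d, d ∈ [a, b, c] ↔ d ∈ [x, y, z] := fun _ => by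
    rw [← hl, ← h]
    exact (sortedDigits_perm 3 n).mem_iff
  simp only [List.mem_cons, List.not_mem_nil, or_false] at hmem
  have := (hmem a).1 (by simp)
  have := (hmem c).1 (by simp)
  have := (hmem x).2 (by simp)
  have := (hmem y).2 (by simp)
  have := (hmem z).2 (by simp)
  simp only [param3, hl, List.getD_cons_succ, List.getD_cons_zero]
  omega

theorem padDigits_three_ninetyNine_mul {α : ℕ} (h1 : 1 ≤ α) (h9 : α ≤ 9) :
    padDigits 3 (99 * α) = [10 - α, 9, α - 1] := by
  rw [padDigits_three]
  interval_cases α <;> rfl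

theorem param3_ninetyNine_mul {α : ℕ} (h1 : 1 ≤ α) (h9 : α ≤ 9) :
    param3 (99 * α) = 9 - min (α - 1) (10 - α) := by
  rw [param3_eq_of_padDigits (padDigits_three_ninetyNine_mul h1 h9)]
  omega

theorem stmt13_general (n : ℕ) :
    (6 ≤ param3 n ∧ param3 n ≤ 9 → param3 (kap 3 n) = param3 n - 1) ∧
    (0 < param3 n ∧ param3 n ≤ 5 → param3 (kap 3 n) = 10 - param3 n) := by
  rw [kap_three_eq_mul_param3]
  constructor
  · rintro ⟨h6, h9⟩
    rw [param3_ninetyNine_mul (by omega) h9]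
    omega
  · rintro ⟨h1, h5⟩
    rw [param3_ninetyNine_mul h1 (by omega)]
    omega

theorem stmt13 (n : ℕ) (h0 : 0 < n) (h1 : n < 1000) (h2 : ¬ allEqDigits 3 n) :
    (6 ≤ param3 n ∧ param3 n ≤ 9 → param3 (kap 3 n) = param3 n - 1) ∧
    (0 < param3 n ∧ param3 n ≤ 5 → param3 (kap 3 n) = 10 - param3 n) :=
  stmt13_general n
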